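/- arXiv:2010.10797 — 3 statements merged into one kernel-verified Lean document; each statement's English description precedes it below -/
import Mathlib

section
/- Let y = Rx where R = R₁ ⊗ ⋯ ⊗ R_d with i.i.d. mean-zero unit-variance entries of fourth moment Δ, M = ∏mᵢ, N = ∏nᵢ, n = max nᵢ, ℳ = max_i |x(i)|. Then for every index i, E[y(i)⁴] ≤ (Δ + 3(n−1))^d · N · ℳ⁴. -/
/-!
Expanding the fourth power, `E[y(i)⁴] = ∑_{j¹,…,j⁴} E[∏ₜ Z_{jᵗ}] ∏ₜ x(jᵗ)` with
`Z_j = ∏ₖ Rₖ(iₖ, jₖ)`. By independence each expectation factors over the modes `k`, and within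
one row of `Rₖ` the mixed moment `E[ξ_a ξ_b ξ_c ξ_e]` is the number of Wick pairings of
`(a, b, c, e)`, corrected by the fourth cumulant `Δ - 3` when all four indices agree; in
particular it is nonnegative. Bounding every `|x(jᵗ)|` by `ℳ` leaves the total weight, which
factors as `∏ₖ nₖ (Δ + 3(nₖ - 1)) ≤ (Δ + 3(n - 1))^d N`.
-/

open MeasureTheory ProbabilityTheory Finset

lemma prod_comp_eq_prod_pow_card_fiber {ι κ M : Type*} [Fintype ι] [Fintype κ] [DecidableEq κ]
    [CommMonoid M] (f : κ → M) (g : ι → κ) : ∏ i, f (g i) = ∏ j, f j ^ #{i | g i = j} := by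
  simp_rw [← prod_const, ← prod_fiberwise' univ g f]

lemma abs_prod_fin_four_le_sum_pow_four (a : Fin 4 → ℝ) : |∏ t, a t| ≤ ∑ t, a t ^ 4 := by
  rw [Fin.prod_univ_four, Fin.sum_univ_four, abs_mul, abs_mul, abs_mul]
  nlinarith [sq_nonneg (|a 0| * |a 1| - |a 2| * |a 3|), sq_nonneg (a 0 ^ 2 - a 1 ^ 2),
    sq_nonneg (a 2 ^ 2 - a 3 ^ 2), sq_abs (a 0), sq_abs (a 1), sq_abs (a 2), sq_abs (a 3),
    abs_nonneg (a 0), abs_nonneg (a 1), abs_nonneg (a 2), abs_nonneg (a 3)]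

lemma sum_fin_four_fun {X M : Type*} [Fintype X] [AddCommMonoid M] (F : X → X → X → X → M) :
    ∑ g : Fin 4 → X, F (g 0) (g 1) (g 2) (g 3) = ∑ a, ∑ b, ∑ c, ∑ e, F a b c e := by
  simp only [← (Fin.consEquiv fun _ ↦ X).sum_comp, Fintype.sum_prod_type]
  simp only [univ_unique, sum_singleton, Fin.consEquiv, Equiv.coe_fn_mk, Fin.cons_zero,
    Fin.cons_one]
  -- `Fin.cons` at the literals `2` and `3` only reduces definitionally
  rfl

lemma sum_mul_prod_le_sum_mul_iSup_pow {J : Type*} [Fintype J] {p : ℕ} {W : (Fin p → J) → ℝ}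
    (hW : ∀ q, 0 ≤ W q) (x : J → ℝ) :
    ∑ q, W q * ∏ t, x (q t) ≤ (∑ q, W q) * (⨆ j, |x j|) ^ p := by
  rw [sum_mul]
  refine sum_le_sum fun q _ ↦ mul_le_mul_of_nonneg_left ?_ (hW q)
  calc ∏ t, x (q t) ≤ ∏ t, |x (q t)| := (le_abs_self _).trans (abs_prod _ _).le
    _ ≤ ∏ _t : Fin p, ⨆ j, |x j| :=
      prod_le_prod (fun t _ ↦ abs_nonneg _) fun t _ ↦
        le_ciSup (f := fun j ↦ |x j|) (Finite.bddAbove_range _) (q t)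
    _ = (⨆ j, |x j|) ^ p := by rw [prod_const, card_univ, Fintype.card_fin]

lemma prod_mul_le_pow_mul_prod {ι : Type*} [Fintype ι] (n : ι → ℕ) {Δ : ℝ}
    (hΔ : ∀ k, n k ≠ 0 → 0 ≤ Δ) :
    ∏ k, (n k : ℝ) * (Δ + 3 * (n k - 1))
      ≤ (Δ + 3 * ((univ.sup n : ℕ) - 1)) ^ Fintype.card ι * ∏ k, (n k : ℝ) := by
  calc ∏ k, (n k : ℝ) * (Δ + 3 * (n k - 1))
      ≤ ∏ k, (n k : ℝ) * (Δ + 3 * ((univ.sup n : ℕ) - 1)) := by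
        refine prod_le_prod (fun k _ ↦ ?_) fun k _ ↦ ?_
        · rcases Nat.eq_zero_or_pos (n k) with hk | hk
          · simp [hk]
          have : (1 : ℝ) ≤ n k := by exact_mod_cast hk
          exact mul_nonneg (Nat.cast_nonneg _) (by linarith [hΔ k hk.ne'])
        · have : (n k : ℝ) ≤ (univ.sup n : ℕ) := by exact_mod_cast le_sup (mem_univ k)
          exact mul_le_mul_of_nonneg_left (by linarith) (Nat.cast_nonneg _)
    _ = _ := by rw [prod_mul_distrib, prod_const, card_univ, mul_comm]

section FourthMixedMoment

variable {X : Type*} [DecidableEq X]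

def fourthMixedMoment (Δ : ℝ) (a b c e : X) : ℝ :=
  (Δ - 3) * (if a = b ∧ b = c ∧ c = e then 1 else 0)
    + (if a = b ∧ c = e then 1 else 0) + (if a = c ∧ b = e then 1 else 0)
    + (if a = e ∧ b = c then 1 else 0)

lemma fourthMixedMoment_nonneg {Δ : ℝ} (hΔ : 0 ≤ Δ) (a b c e : X) :
    0 ≤ fourthMixedMoment Δ a b c e := by
  unfold fourthMixedMoment
  by_cases h : a = b ∧ b = c ∧ c = e
  · obtain ⟨rfl, rfl, rfl⟩ := h
    simp only [and_self, ↓reduceIte, mul_one]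
    linarith
  · simp only [if_neg h, mul_zero, zero_add]
    positivity

lemma sum_fourthMixedMoment [Fintype X] (Δ : ℝ) :
    ∑ g : Fin 4 → X, fourthMixedMoment Δ (g 0) (g 1) (g 2) (g 3)
      = Fintype.card X * (Δ + 3 * (Fintype.card X - 1)) := by
  rw [sum_fin_four_fun (fourthMixedMoment Δ)]
  simp only [fourthMixedMoment, ite_and, mul_ite, mul_one, mul_zero, sum_add_distrib,
    sum_ite_irrel, sum_ite_eq, mem_univ, ↓reduceIte, sum_const_zero, sum_const, card_univ,
    nsmul_eq_mul]
  ring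

/-- `μ y k` plays the `k`-th moment of `ξ y`. The third moment is not needed: a fiber of size 3
comes with one of size 1. -/
lemma prod_card_fiber_eq_fourthMixedMoment [Fintype X] {μ : X → ℕ → ℝ} {Δ : ℝ}
    (h0 : ∀ y, μ y 0 = 1) (h1 : ∀ y, μ y 1 = 0) (h2 : ∀ y, μ y 2 = 1) (h4 : ∀ y, μ y 4 = Δ)
    (g : Fin 4 → X) :
    ∏ y, μ y #{t | g t = y} = fourthMixedMoment Δ (g 0) (g 1) (g 2) (g 3) := by
  have hcard : ∀ y, #{t | g t = y} = (if g 0 = y then 1 else 0) + (if g 1 = y then 1 else 0)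
      + (if g 2 = y then 1 else 0) + (if g 3 = y then 1 else 0) := fun y ↦ by
    rw [card_filter, Fin.sum_univ_four]
  simp only [hcard]
  rw [← prod_subset (subset_univ {g 0, g 1, g 2, g 3}) fun y _ hy ↦ by
    simp only [mem_insert, mem_singleton, not_or] at hy
    simp [Ne.symm hy.1, Ne.symm hy.2.1, Ne.symm hy.2.2.1, Ne.symm hy.2.2.2, h0]]
  unfold fourthMixedMoment
  clear hcard
  generalize g 0 = a, g 1 = b, g 2 = c, g 3 = e
  by_cases hab : a = b <;> by_cases hac : a = c <;> by_cases hae : a = e <;>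
    by_cases hbc : b = c <;> by_cases hbe : b = e <;> by_cases hce : c = e <;>
    simp_all [prod_insert, Ne.symm]; ring

end FourthMixedMoment

lemma sum_prod_fourthMixedMoment {ι : Type*} [Fintype ι] [DecidableEq ι] {κ : ι → Type*}
    [∀ k, Fintype (κ k)] [∀ k, DecidableEq (κ k)] (Δ : ℝ) :
    ∑ q : Fin 4 → ∀ k, κ k, ∏ k, fourthMixedMoment Δ (q 0 k) (q 1 k) (q 2 k) (q 3 k)
      = ∏ k, (Fintype.card (κ k) : ℝ) * (Δ + 3 * (Fintype.card (κ k) - 1)) := by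
  simp_rw [← sum_fourthMixedMoment, Fintype.prod_sum]
  exact Fintype.sum_equiv (Equiv.piComm fun (_ : Fin 4) k ↦ κ k) _ _ fun q ↦ rfl

namespace ProbabilityTheory

variable {Ω : Type*} {mΩ : MeasurableSpace Ω} {P : Measure Ω}

lemma iIndepFun.curry {ι : Type*} {κ : ι → Type*} {𝓧 : (i : ι) → κ i → Type*}
    {m𝓧 : ∀ i j, MeasurableSpace (𝓧 i j)} {X : (i : ι) → (j : κ i) → Ω → 𝓧 i j}
    (mX : ∀ i j, Measurable (X i j)) (h : iIndepFun (fun p : (i : ι) × κ i ↦ X p.1 p.2) P) :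
    iIndepFun (fun i ω ↦ (X i · ω)) P := by
  have := h.isProbabilityMeasure
  have : ∀ i j, IsProbabilityMeasure (P.map (X i j)) :=
    fun i j ↦ Measure.isProbabilityMeasure_map (mX i j).aemeasurable
  have hblock : ∀ i, iIndepFun (X i) P := fun i ↦ h.precomp (g := Sigma.mk i) sigma_mk_injective
  rw [iIndepFun_iff_map_fun_eq_infinitePi_map (fun i ↦ by fun_prop)]
  have hcurry : (MeasurableEquiv.piCurry 𝓧) ∘ (fun ω p ↦ X p.1 p.2 ω) = fun ω i j ↦ X i j ω := by
    ext; simp [Sigma.curry]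
  rw [← hcurry, ← Measure.map_map (by fun_prop) (by fun_prop),
    (iIndepFun_iff_map_fun_eq_infinitePi_map (fun p ↦ mX p.1 p.2)).1 h,
    Measure.infinitePi_map_piCurry (fun i j ↦ P.map (X i j))]
  congrm Measure.infinitePi fun i ↦ ?_
  rw [(iIndepFun_iff_map_fun_eq_infinitePi_map (mX i)).1 (hblock i)]

lemma iIndepFun.integrable_fun_prod_comp {ι 𝕜 : Type*} [Fintype ι] [NormedCommRing 𝕜]
    {𝓧 : ι → Type*} {m𝓧 : ∀ i, MeasurableSpace (𝓧 i)} {X : (i : ι) → Ω → 𝓧 i}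
    {f : (i : ι) → 𝓧 i → 𝕜} (hX : iIndepFun X P) (mX : ∀ i, AEMeasurable (X i) P)
    (hf : ∀ i, Integrable (f i) (P.map (X i))) :
    Integrable (fun ω ↦ ∏ i, f i (X i ω)) P := by
  have := hX.isProbabilityMeasure
  have hfX : Integrable (fun x : (i : ι) → 𝓧 i ↦ ∏ i, f i (x i)) (P.map (fun ω i ↦ X i ω)) := by
    rw [hX.map_fun_eq_pi_map mX]
    exact .fintype_prod_dep hf
  exact hfX.comp_aemeasurable (aemeasurable_pi_iff.2 mX)

end ProbabilityTheory

section Moments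

variable {Ω : Type*} {mΩ : MeasurableSpace Ω} {P : Measure Ω}

lemma integrable_prod_fin_four_of_pow_four {J : Type*} {Z : J → Ω → ℝ}
    (mZ : ∀ j, AEStronglyMeasurable (Z j) P) (hZ : ∀ j, Integrable (fun ω ↦ Z j ω ^ 4) P)
    (g : Fin 4 → J) : Integrable (fun ω ↦ ∏ t, Z (g t) ω) P :=
  (integrable_finsetSum univ fun t _ ↦ hZ (g t)).mono'
    (aestronglyMeasurable_fun_prod univ fun t _ ↦ mZ (g t))
    (ae_of_all _ fun ω ↦ (Real.norm_eq_abs _).trans_le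
      (abs_prod_fin_four_le_sum_pow_four fun t ↦ Z (g t) ω))

lemma integral_sum_mul_pow_four {J : Type*} [Fintype J] {Z : J → Ω → ℝ}
    (mZ : ∀ j, AEStronglyMeasurable (Z j) P) (hZ : ∀ j, Integrable (fun ω ↦ Z j ω ^ 4) P)
    (x : J → ℝ) :
    ∫ ω, (∑ j, Z j ω * x j) ^ 4 ∂P
      = ∑ q : Fin 4 → J, (∫ ω, ∏ t, Z (q t) ω ∂P) * ∏ t, x (q t) := by
  simp_rw [Fintype.sum_pow, prod_mul_distrib]
  rw [integral_finsetSum _ fun q _ ↦ (integrable_prod_fin_four_of_pow_four mZ hZ q).mul_const _]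
  simp_rw [integral_mul_const]

variable {X : Type*} [Fintype X] [DecidableEq X]

lemma integral_prod_fin_four_eq_fourthMixedMoment {ξ : X → Ω → ℝ} {Δ : ℝ} (hξ : iIndepFun ξ P)
    (mξ : ∀ y, AEMeasurable (ξ y) P) (h1 : ∀ y, ∫ ω, ξ y ω ∂P = 0)
    (h2 : ∀ y, ∫ ω, ξ y ω ^ 2 ∂P = 1) (h4 : ∀ y, ∫ ω, ξ y ω ^ 4 ∂P = Δ) (g : Fin 4 → X) :
    ∫ ω, ∏ t, ξ (g t) ω ∂P = fourthMixedMoment Δ (g 0) (g 1) (g 2) (g 3) := by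
  have := hξ.isProbabilityMeasure
  have hfiber : ∀ ω, ∏ t, ξ (g t) ω = ∏ y, ξ y ω ^ #{t | g t = y} :=
    fun ω ↦ prod_comp_eq_prod_pow_card_fiber (ξ · ω) g
  simp_rw [hfiber]
  rw [hξ.integral_fun_prod_comp mξ fun y ↦ (continuous_pow _).aestronglyMeasurable]
  exact prod_card_fiber_eq_fourthMixedMoment (μ := fun y k ↦ ∫ ω, ξ y ω ^ k ∂P) (by simp)
    (by simpa using h1) h2 h4 g

end Moments

section Tensor

variable {Ω : Type*} {mΩ : MeasurableSpace Ω} {P : Measure Ω}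
  {ι : Type*} [Fintype ι] {κ : ι → Type*} {ξ : (k : ι) → κ k → Ω → ℝ}

lemma integrable_prod_pow_four_of_iIndepFun
    (hξ : iIndepFun (fun p : (k : ι) × κ k ↦ ξ p.1 p.2) P) (mξ : ∀ k c, Measurable (ξ k c))
    (h4 : ∀ k c, Integrable (fun ω ↦ ξ k c ω ^ 4) P) (j : ∀ k, κ k) :
    Integrable (fun ω ↦ (∏ k, ξ k (j k) ω) ^ 4) P := by
  simp_rw [← prod_pow]
  have hj : iIndepFun (fun k ↦ ξ k (j k)) P :=
    hξ.precomp (g := fun k ↦ ⟨k, j k⟩) fun _ _ h ↦ congrArg Sigma.fst h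
  exact hj.integrable_fun_prod_comp (f := fun _ y ↦ y ^ 4) (fun k ↦ (mξ k (j k)).aemeasurable)
    fun k ↦ (integrable_map_measure (by fun_prop) (mξ k (j k)).aemeasurable).2 (h4 k (j k))

lemma integral_prod_fin_four_prod_eq_prod_fourthMixedMoment [∀ k, Fintype (κ k)]
    [∀ k, DecidableEq (κ k)] {Δ : ℝ} (hξ : iIndepFun (fun p : (k : ι) × κ k ↦ ξ p.1 p.2) P)
    (mξ : ∀ k c, Measurable (ξ k c)) (h1 : ∀ k c, ∫ ω, ξ k c ω ∂P = 0)
    (h2 : ∀ k c, ∫ ω, ξ k c ω ^ 2 ∂P = 1) (h4 : ∀ k c, ∫ ω, ξ k c ω ^ 4 ∂P = Δ)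
    (q : Fin 4 → ∀ k, κ k) :
    ∫ ω, ∏ t, ∏ k, ξ k (q t k) ω ∂P
      = ∏ k, fourthMixedMoment Δ (q 0 k) (q 1 k) (q 2 k) (q 3 k) := by
  simp_rw [prod_comm (s := (univ : Finset (Fin 4)))]
  rw [(hξ.curry mξ).integral_fun_prod_comp (f := fun k v ↦ ∏ t, v (q t k))
    (fun k ↦ by fun_prop) fun k ↦ (Finset.measurable_prod _ fun t _ ↦
      measurable_pi_apply (q t k)).aestronglyMeasurable]
  exact prod_congr rfl fun k _ ↦ integral_prod_fin_four_eq_fourthMixedMoment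
    (hξ.precomp sigma_mk_injective) (fun c ↦ (mξ k c).aemeasurable) (h1 k) (h2 k) (h4 k)
    fun t ↦ q t k

lemma integral_sum_prod_mul_pow_four [DecidableEq ι] [∀ k, Fintype (κ k)] [∀ k, DecidableEq (κ k)]
    {Δ : ℝ}
    (hξ : iIndepFun (fun p : (k : ι) × κ k ↦ ξ p.1 p.2) P) (mξ : ∀ k c, Measurable (ξ k c))
    (h1 : ∀ k c, ∫ ω, ξ k c ω ∂P = 0) (h2 : ∀ k c, ∫ ω, ξ k c ω ^ 2 ∂P = 1)
    (h4 : ∀ k c, ∫ ω, ξ k c ω ^ 4 ∂P = Δ) (h4int : ∀ k c, Integrable (fun ω ↦ ξ k c ω ^ 4) P)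
    (x : (∀ k, κ k) → ℝ) :
    ∫ ω, (∑ j, (∏ k, ξ k (j k) ω) * x j) ^ 4 ∂P
      = ∑ q : Fin 4 → ∀ k, κ k,
          (∏ k, fourthMixedMoment Δ (q 0 k) (q 1 k) (q 2 k) (q 3 k)) * ∏ t, x (q t) := by
  rw [integral_sum_mul_pow_four
    (fun j ↦ (Finset.measurable_prod _ fun k _ ↦ mξ k (j k)).aestronglyMeasurable)
    (integrable_prod_pow_four_of_iIndepFun hξ mξ h4int)]
  simp_rw [integral_prod_fin_four_prod_eq_prod_fourthMixedMoment hξ mξ h1 h2 h4]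

end Tensor

theorem ttrp_coordinate_fourth_moment_bound_general {Ω : Type*} [MeasureSpace Ω]
    {d : ℕ} (m n : Fin d → ℕ) (Δ : ℝ)
    (R : ∀ k : Fin d, Ω → Matrix (Fin (m k)) (Fin (n k)) ℝ)
    (hmeas : ∀ k i j, Measurable fun ω => R k ω i j)
    (hindep : iIndepFun
      (fun p : Σ k : Fin d, Fin (m k) × Fin (n k) => fun ω => R p.1 ω p.2.1 p.2.2) volume)
    (hmean : ∀ k i j, ∫ ω, R k ω i j = 0)
    (hvar : ∀ k i j, ∫ ω, (R k ω i j) ^ 2 = 1)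
    (hfour : ∀ k i j, ∫ ω, (R k ω i j) ^ 4 = Δ)
    (hint : ∀ k i j, Integrable fun ω => (R k ω i j) ^ 4)
    (x : (∀ k, Fin (n k)) → ℝ) :
    ∀ i : ∀ k, Fin (m k),
      ∫ ω, (∑ j : ∀ k, Fin (n k), (∏ k, R k ω (i k) (j k)) * x j) ^ 4
        ≤ (Δ + 3 * (((univ.sup n : ℕ) : ℝ) - 1)) ^ d *
            (∏ k, (n k : ℝ)) * (⨆ j, |x j|) ^ 4 := by
  intro i
  have hrow : iIndepFun (fun p : (k : Fin d) × Fin (n k) ↦ fun ω ↦ R p.1 ω (i p.1) p.2) volume :=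
    hindep.precomp (Function.injective_id.sigma_map fun k ↦ Prod.mk_right_injective (i k))
  have hΔ : ∀ k, Fin (n k) → 0 ≤ Δ := fun k c ↦
    hfour k (i k) c ▸ integral_nonneg fun ω ↦ by positivity
  rw [integral_sum_prod_mul_pow_four (ξ := fun k c ω ↦ R k ω (i k) c) hrow (fun k c ↦ hmeas _ _ _)
    (fun k c ↦ hmean _ _ _) (fun k c ↦ hvar _ _ _) (fun k c ↦ hfour _ _ _) fun k c ↦ hint _ _ _]
  calc _ ≤ (∑ q : Fin 4 → ∀ k, Fin (n k),
          ∏ k, fourthMixedMoment Δ (q 0 k) (q 1 k) (q 2 k) (q 3 k)) * (⨆ j, |x j|) ^ 4 :=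
        sum_mul_prod_le_sum_mul_iSup_pow (fun q : Fin 4 → ∀ k, Fin (n k) ↦ prod_nonneg fun k _ ↦
          fourthMixedMoment_nonneg (hΔ k (q 0 k)) _ _ _ _) x
    _ ≤ _ := by
        rw [sum_prod_fourthMixedMoment]
        simpa using mul_le_mul_of_nonneg_right
          (prod_mul_le_pow_mul_prod n fun k hk ↦ hΔ k ⟨0, Nat.pos_of_ne_zero hk⟩)
          (by positivity : (0 : ℝ) ≤ (⨆ j, |x j|) ^ 4)

/-- Fourth-moment bound for a single coordinate of `y = Rx`, where
`R = R₁ ⊗ ⋯ ⊗ R_d` has i.i.d. mean-zero unit-variance entries with fourth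
moment `Δ`: `E[y(i)⁴] ≤ (Δ + 3(n−1))^d N ℳ⁴`. -/
theorem ttrp_coordinate_fourth_moment_bound {Ω : Type*} [MeasureSpace Ω]
    [IsProbabilityMeasure (volume : Measure Ω)]
    {d : ℕ} (m n : Fin d → ℕ) (Δ : ℝ)
    (R : ∀ k : Fin d, Ω → Matrix (Fin (m k)) (Fin (n k)) ℝ)
    (hmeas : ∀ k i j, Measurable fun ω => R k ω i j)
    (hindep : iIndepFun
      (fun p : Σ k : Fin d, Fin (m k) × Fin (n k) => fun ω => R p.1 ω p.2.1 p.2.2) volume)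
    (hid : ∀ p q : Σ k : Fin d, Fin (m k) × Fin (n k),
      IdentDistrib (fun ω => R p.1 ω p.2.1 p.2.2) (fun ω => R q.1 ω q.2.1 q.2.2)
        volume volume)
    (hmean : ∀ k i j, ∫ ω, R k ω i j = 0)
    (hvar : ∀ k i j, ∫ ω, (R k ω i j) ^ 2 = 1)
    (hfour : ∀ k i j, ∫ ω, (R k ω i j) ^ 4 = Δ)
    (hint : ∀ k i j, Integrable fun ω => (R k ω i j) ^ 4)
    (x : (∀ k, Fin (n k)) → ℝ) :
    ∀ i : ∀ k, Fin (m k),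
      ∫ ω, (∑ j : ∀ k, Fin (n k), (∏ k, R k ω (i k) (j k)) * x j) ^ 4
        ≤ (Δ + 3 * (((univ.sup n : ℕ) : ℝ) - 1)) ^ d *
            (∏ k, (n k : ℝ)) * (⨆ j, |x j|) ^ 4 :=
  ttrp_coordinate_fourth_moment_bound_general m n Δ R hmeas hindep hmean hvar hfour hint x
end

section
/- Let R₁ = [[a₁,a₂],[b₁,b₂]] and R₂ = [[c₁,c₂],[d₁,d₂]] be independent 2×2 random matrices with i.i.d. mean-zero, variance-one entries with finite fourth moment, and let y = (R₁ ⊗ R₂)x for a fixed x ∈ ℝ⁴. Then Cov(y(1)², y(3)²) = (x₁²+x₃²)² Var(c₁²) + (x₂²+x₄²)² Var(c₂²) + 4(x₁x₂+x₃x₄)². -/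
/-!
Write `y(1) = a₁u + a₂v` and `y(3) = b₁u + b₂v` with `u = c₁x₁ + c₂x₂` and `v = c₁x₃ + c₂x₄`.
The pair `(a₁, a₂)` is orthonormal in `L²` and independent of `(b₁, b₂, c₁, c₂)`, so integrating
it out replaces `y(1)²` by `u² + v²` inside any expectation; likewise `(b₁, b₂)` replaces `y(3)²`
by `u² + v²`. Hence `Cov(y(1)², y(3)²) = Var(u² + v²)`. Finally
`u² + v² = (x₁² + x₃²)c₁² + 2(x₁x₂ + x₃x₄)c₁c₂ + (x₂² + x₄²)c₂²`, whose three terms are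
uncorrelated, and `Var(c₁c₂) = 1`.
-/

open MeasureTheory ProbabilityTheory

/-- `y(1)` of the 2×2 Kronecker example:
`y₁ = a₁c₁x₁ + a₁c₂x₂ + a₂c₁x₃ + a₂c₂x₄`. -/
def kronCoord (a1 a2 c1 c2 x1 x2 x3 x4 : ℝ) : ℝ :=
  a1 * c1 * x1 + a1 * c2 * x2 + a2 * c1 * x3 + a2 * c2 * x4

instance : ENNReal.HolderTriple 4 4 2 := by
  rw [ENNReal.holderTriple_iff, show (4 : ENNReal) = 2 * 2 by norm_num,
    ENNReal.mul_inv (by simp) (by simp), ← mul_add, ENNReal.inv_two_add_inv_two, mul_one]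

section

variable {Ω : Type*} [MeasurableSpace Ω] {μ : Measure Ω}

lemma MeasureTheory.memLp_iff_integrable_pow_of_even {f : Ω → ℝ} {n : ℕ} (hn : Even n)
    (hn0 : n ≠ 0) (hf : AEStronglyMeasurable f μ) :
    MemLp f n μ ↔ Integrable (fun ω => f ω ^ n) μ := by
  rw [← integrable_norm_rpow_iff hf (by exact_mod_cast hn0) (by simp)]
  simp [Real.norm_eq_abs, hn.pow_abs]

lemma MeasureTheory.MemLp.integrable_pow [IsFiniteMeasure μ] {f : Ω → ℝ} {n i : ℕ}
    (hf : MemLp f n μ) (hi : i ≤ n) : Integrable (fun ω => f ω ^ i) μ := by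
  have := (hf.mono_exponent (by exact_mod_cast hi : (i : ENNReal) ≤ n)).integrable_norm_pow'
  exact (integrable_norm_iff (hf.1.pow i)).1 (by simpa [norm_pow] using this)

lemma MeasureTheory.MemLp.sq_of_four {f : Ω → ℝ} (hf : MemLp f 4 μ) :
    MemLp (fun ω => f ω ^ 2) 2 μ := by
  simp only [sq]
  exact hf.mul hf

lemma ProbabilityTheory.IndepFun.memLp_mul {X Y : Ω → ℝ} {p : ENNReal} (h : IndepFun X Y μ)
    (hp0 : p ≠ 0) (hptop : p ≠ ⊤) (hX : MemLp X p μ) (hY : MemLp Y p μ) : MemLp (X * Y) p μ := by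
  rw [← integrable_norm_rpow_iff (hX.1.mul hY.1) hp0 hptop]
  have hind : IndepFun (fun ω => ‖X ω‖ ^ p.toReal) (fun ω => ‖Y ω‖ ^ p.toReal) μ :=
    h.comp (φ := fun x => ‖x‖ ^ p.toReal) (ψ := fun x => ‖x‖ ^ p.toReal) (by fun_prop)
      (by fun_prop)
  simp only [Pi.mul_apply, norm_mul, Real.mul_rpow (norm_nonneg _) (norm_nonneg _)]
  exact hind.integrable_mul (hX.integrable_norm_rpow hp0 hptop) (hY.integrable_norm_rpow hp0 hptop)

lemma ProbabilityTheory.iIndepFun.indepFun_prodMk_prodMk_prodMk {ι β : Type*} [DecidableEq ι]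
    [MeasurableSpace β] {f : ι → Ω → β} (h : iIndepFun f μ) (hf : ∀ i, Measurable (f i))
    {i j k l m n : ι} (hdisj : Disjoint ({i, j} : Finset ι) {k, l, m, n}) :
    IndepFun (fun ω => (f i ω, f j ω)) (fun ω => ((f k ω, f l ω), (f m ω, f n ω))) μ :=
  (h.indepFun_finset _ _ hdisj hf).comp
    (φ := fun a : ({i, j} : Finset ι) → β => (a ⟨i, by simp⟩, a ⟨j, by simp⟩))
    (ψ := fun b : ({k, l, m, n} : Finset ι) → β =>
      ((b ⟨k, by simp⟩, b ⟨l, by simp⟩), (b ⟨m, by simp⟩, b ⟨n, by simp⟩)))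
    (by fun_prop) (by fun_prop)

def IsOrthonormalPair (a₁ a₂ : Ω → ℝ) (μ : Measure Ω) : Prop :=
  ∫ ω, a₁ ω ^ 2 ∂μ = 1 ∧ ∫ ω, a₂ ω ^ 2 ∂μ = 1 ∧ ∫ ω, a₁ ω * a₂ ω ∂μ = 0

lemma integral_sq_linComb_mul_of_indepFun {a₁ a₂ u v g : Ω → ℝ}
    (hind : IndepFun (fun ω => (a₁ ω, a₂ ω)) (fun ω => (u ω, v ω, g ω)) μ)
    (ha : IsOrthonormalPair a₁ a₂ μ) (ha₁ : MemLp a₁ 2 μ) (ha₂ : MemLp a₂ 2 μ)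
    (hu : MemLp u 4 μ) (hv : MemLp v 4 μ) (hg : MemLp g 2 μ) :
    ∫ ω, (a₁ ω * u ω + a₂ ω * v ω) ^ 2 * g ω ∂μ = ∫ ω, (u ω ^ 2 + v ω ^ 2) * g ω ∂μ := by
  obtain ⟨hvar₁, hvar₂, hcorr⟩ := ha
  have indep {φ : ℝ × ℝ → ℝ} {ψ : ℝ × ℝ × ℝ → ℝ} (hφ : Measurable φ) (hψ : Measurable ψ) :
      IndepFun (fun ω => φ (a₁ ω, a₂ ω)) (fun ω => ψ (u ω, v ω, g ω)) μ :=
    hind.comp hφ hψ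
  have h₁ : IndepFun (fun ω => a₁ ω ^ 2) (fun ω => u ω ^ 2 * g ω) μ :=
    indep (φ := fun p => p.1 ^ 2) (ψ := fun q => q.1 ^ 2 * q.2.2) (by fun_prop) (by fun_prop)
  have h₂ : IndepFun (fun ω => a₁ ω * a₂ ω) (fun ω => u ω * v ω * g ω) μ :=
    indep (φ := fun p => p.1 * p.2) (ψ := fun q => q.1 * q.2.1 * q.2.2) (by fun_prop)
      (by fun_prop)
  have h₃ : IndepFun (fun ω => a₂ ω ^ 2) (fun ω => v ω ^ 2 * g ω) μ :=
    indep (φ := fun p => p.2 ^ 2) (ψ := fun q => q.2.1 ^ 2 * q.2.2) (by fun_prop) (by fun_prop)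
  have iuu : Integrable (fun ω => u ω ^ 2 * g ω) μ := hu.sq_of_four.integrable_mul hg
  have iuv : Integrable (fun ω => u ω * v ω * g ω) μ := (hv.mul hu (r := 2)).integrable_mul hg
  have ivv : Integrable (fun ω => v ω ^ 2 * g ω) μ := hv.sq_of_four.integrable_mul hg
  have i₁ : Integrable (fun ω => a₁ ω ^ 2 * (u ω ^ 2 * g ω)) μ :=
    h₁.integrable_mul ha₁.integrable_sq iuu
  have i₂ : Integrable (fun ω => a₁ ω * a₂ ω * (u ω * v ω * g ω)) μ :=
    h₂.integrable_mul (ha₁.integrable_mul ha₂) iuv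
  have i₃ : Integrable (fun ω => a₂ ω ^ 2 * (v ω ^ 2 * g ω)) μ :=
    h₃.integrable_mul ha₂.integrable_sq ivv
  have e₁ : ∫ ω, a₁ ω ^ 2 * (u ω ^ 2 * g ω) ∂μ = (∫ ω, a₁ ω ^ 2 ∂μ) * ∫ ω, u ω ^ 2 * g ω ∂μ :=
    h₁.integral_mul_eq_mul_integral (ha₁.1.pow 2) iuu.1
  have e₂ : ∫ ω, a₁ ω * a₂ ω * (u ω * v ω * g ω) ∂μ
      = (∫ ω, a₁ ω * a₂ ω ∂μ) * ∫ ω, u ω * v ω * g ω ∂μ :=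
    h₂.integral_mul_eq_mul_integral (ha₁.1.mul ha₂.1) iuv.1
  have e₃ : ∫ ω, a₂ ω ^ 2 * (v ω ^ 2 * g ω) ∂μ = (∫ ω, a₂ ω ^ 2 ∂μ) * ∫ ω, v ω ^ 2 * g ω ∂μ :=
    h₃.integral_mul_eq_mul_integral (ha₂.1.pow 2) ivv.1
  calc ∫ ω, (a₁ ω * u ω + a₂ ω * v ω) ^ 2 * g ω ∂μ
      = ∫ ω, a₁ ω ^ 2 * (u ω ^ 2 * g ω) + 2 * (a₁ ω * a₂ ω * (u ω * v ω * g ω))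
          + a₂ ω ^ 2 * (v ω ^ 2 * g ω) ∂μ := by
        congr 1; funext ω; ring
    _ = ∫ ω, u ω ^ 2 * g ω ∂μ + ∫ ω, v ω ^ 2 * g ω ∂μ := by
        rw [integral_add (by fun_prop) i₃, integral_add i₁ (by fun_prop), integral_const_mul,
          e₁, e₂, e₃, hvar₁, hvar₂, hcorr]
        ring
    _ = ∫ ω, (u ω ^ 2 + v ω ^ 2) * g ω ∂μ := by
        rw [← integral_add iuu ivv]
        simp_rw [add_mul]

lemma var_quadForm_of_indepFun [IsFiniteMeasure μ] {c₁ c₂ : Ω → ℝ} (hind : IndepFun c₁ c₂ μ)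
    (h₁ : MemLp c₁ 4 μ) (h₂ : MemLp c₂ 4 μ) (hmean₁ : ∫ ω, c₁ ω ∂μ = 0)
    (hmean₂ : ∫ ω, c₂ ω ∂μ = 0) (hvar₁ : ∫ ω, c₁ ω ^ 2 ∂μ = 1) (hvar₂ : ∫ ω, c₂ ω ^ 2 ∂μ = 1)
    (α β γ : ℝ) :
    (∫ ω, (α * c₁ ω ^ 2 + 2 * γ * (c₁ ω * c₂ ω) + β * c₂ ω ^ 2) ^ 2 ∂μ)
        - (∫ ω, α * c₁ ω ^ 2 + 2 * γ * (c₁ ω * c₂ ω) + β * c₂ ω ^ 2 ∂μ) ^ 2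
      = α ^ 2 * ((∫ ω, c₁ ω ^ 4 ∂μ) - (∫ ω, c₁ ω ^ 2 ∂μ) ^ 2)
        + β ^ 2 * ((∫ ω, c₂ ω ^ 4 ∂μ) - (∫ ω, c₂ ω ^ 2 ∂μ) ^ 2) + 4 * γ ^ 2 := by
  have monomial (i j : ℕ) (hi : i ≤ 4) (hj : j ≤ 4) :
      Integrable (fun ω => c₁ ω ^ i * c₂ ω ^ j) μ ∧
        ∫ ω, c₁ ω ^ i * c₂ ω ^ j ∂μ = (∫ ω, c₁ ω ^ i ∂μ) * ∫ ω, c₂ ω ^ j ∂μ := by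
    have h : IndepFun (fun ω => c₁ ω ^ i) (fun ω => c₂ ω ^ j) μ :=
      hind.comp (φ := fun x => x ^ i) (ψ := fun x => x ^ j) (by fun_prop) (by fun_prop)
    exact ⟨h.integrable_mul (h₁.integrable_pow hi) (h₂.integrable_pow hj),
      h.integral_mul_eq_mul_integral (h₁.1.pow i) (h₂.1.pow j)⟩
  obtain ⟨i₁₁, e₁₁⟩ := monomial 1 1 (by norm_num) (by norm_num)
  obtain ⟨i₂₂, e₂₂⟩ := monomial 2 2 (by norm_num) (by norm_num)
  obtain ⟨i₃₁, e₃₁⟩ := monomial 3 1 (by norm_num) (by norm_num)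
  obtain ⟨i₁₃, e₁₃⟩ := monomial 1 3 (by norm_num) (by norm_num)
  simp only [pow_one] at i₁₁ e₁₁ i₃₁ e₃₁ i₁₃ e₁₃
  have i₂ := h₁.integrable_pow (i := 2) (by norm_num)
  have i₂' := h₂.integrable_pow (i := 2) (by norm_num)
  have i₄ := h₁.integrable_pow (i := 4) le_rfl
  have i₄' := h₂.integrable_pow (i := 4) le_rfl
  have first : ∫ ω, α * c₁ ω ^ 2 + 2 * γ * (c₁ ω * c₂ ω) + β * c₂ ω ^ 2 ∂μ = α + β := by
    rw [integral_add (by fun_prop) (by fun_prop), integral_add (by fun_prop) (by fun_prop)]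
    simp only [integral_const_mul, e₁₁, hmean₁, hvar₁, hvar₂]
    ring
  have second : ∫ ω, (α * c₁ ω ^ 2 + 2 * γ * (c₁ ω * c₂ ω) + β * c₂ ω ^ 2) ^ 2 ∂μ
      = α ^ 2 * ∫ ω, c₁ ω ^ 4 ∂μ + β ^ 2 * ∫ ω, c₂ ω ^ 4 ∂μ + 2 * α * β + 4 * γ ^ 2 := by
    calc _ = ∫ ω, α ^ 2 * c₁ ω ^ 4 + β ^ 2 * c₂ ω ^ 4
              + (2 * α * β + 4 * γ ^ 2) * (c₁ ω ^ 2 * c₂ ω ^ 2)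
              + 4 * α * γ * (c₁ ω ^ 3 * c₂ ω) + 4 * β * γ * (c₁ ω * c₂ ω ^ 3) ∂μ := by
          congr 1; funext ω; ring
      _ = _ := by
          rw [integral_add (by fun_prop) (by fun_prop), integral_add (by fun_prop) (by fun_prop),
            integral_add (by fun_prop) (by fun_prop), integral_add (by fun_prop) (by fun_prop)]
          simp only [integral_const_mul, e₂₂, e₃₁, e₁₃, hmean₁, hmean₂, hvar₁, hvar₂]
          ring
  rw [first, second, hvar₁, hvar₂]
  ring

lemma cov_sq_linComb_eq_var_sumSq [IsFiniteMeasure μ] {a₁ a₂ b₁ b₂ u v : Ω → ℝ}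
    (hab : IndepFun (fun ω => (a₁ ω, a₂ ω)) (fun ω => ((b₁ ω, b₂ ω), (u ω, v ω))) μ)
    (hbc : IndepFun (fun ω => (b₁ ω, b₂ ω)) (fun ω => (u ω, v ω)) μ)
    (ha : IsOrthonormalPair a₁ a₂ μ) (hb : IsOrthonormalPair b₁ b₂ μ)
    (ha₁ : MemLp a₁ 2 μ) (ha₂ : MemLp a₂ 2 μ) (hb₁ : MemLp b₁ 4 μ) (hb₂ : MemLp b₂ 4 μ)
    (hu : MemLp u 4 μ) (hv : MemLp v 4 μ) :
    (∫ ω, (a₁ ω * u ω + a₂ ω * v ω) ^ 2 * (b₁ ω * u ω + b₂ ω * v ω) ^ 2 ∂μ)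
        - (∫ ω, (a₁ ω * u ω + a₂ ω * v ω) ^ 2 ∂μ) * ∫ ω, (b₁ ω * u ω + b₂ ω * v ω) ^ 2 ∂μ
      = (∫ ω, (u ω ^ 2 + v ω ^ 2) ^ 2 ∂μ) - (∫ ω, u ω ^ 2 + v ω ^ 2 ∂μ) ^ 2 := by
  have hb₁₂ := hb₁.mono_exponent (p := 2) (by norm_num)
  have hb₂₂ := hb₂.mono_exponent (p := 2) (by norm_num)
  have hy : MemLp (fun ω => b₁ ω * u ω + b₂ ω * v ω) 4 μ := by
    refine (IndepFun.memLp_mul ?_ (by norm_num) (by norm_num) hb₁ hu).add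
      (IndepFun.memLp_mul ?_ (by norm_num) (by norm_num) hb₂ hv)
    · exact hbc.comp (φ := Prod.fst) (ψ := Prod.fst) (by fun_prop) (by fun_prop)
    · exact hbc.comp (φ := Prod.snd) (ψ := Prod.snd) (by fun_prop) (by fun_prop)
  have hS : MemLp (fun ω => u ω ^ 2 + v ω ^ 2) 2 μ := hu.sq_of_four.add hv.sq_of_four
  have mixed : ∫ ω, (a₁ ω * u ω + a₂ ω * v ω) ^ 2 * (b₁ ω * u ω + b₂ ω * v ω) ^ 2 ∂μ
      = ∫ ω, (u ω ^ 2 + v ω ^ 2) ^ 2 ∂μ := by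
    calc _ = ∫ ω, (u ω ^ 2 + v ω ^ 2) * (b₁ ω * u ω + b₂ ω * v ω) ^ 2 ∂μ :=
          integral_sq_linComb_mul_of_indepFun
            (hab.comp measurable_id (ψ := fun z : (ℝ × ℝ) × ℝ × ℝ =>
              (z.2.1, z.2.2, (z.1.1 * z.2.1 + z.1.2 * z.2.2) ^ 2)) (by fun_prop))
            ha ha₁ ha₂ hu hv hy.sq_of_four
      _ = ∫ ω, (b₁ ω * u ω + b₂ ω * v ω) ^ 2 * (u ω ^ 2 + v ω ^ 2) ∂μ := by simp_rw [mul_comm]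
      _ = ∫ ω, (u ω ^ 2 + v ω ^ 2) * (u ω ^ 2 + v ω ^ 2) ∂μ :=
          integral_sq_linComb_mul_of_indepFun
            (hbc.comp measurable_id (ψ := fun c : ℝ × ℝ => (c.1, c.2, c.1 ^ 2 + c.2 ^ 2))
              (by fun_prop))
            hb hb₁₂ hb₂₂ hu hv hS
      _ = ∫ ω, (u ω ^ 2 + v ω ^ 2) ^ 2 ∂μ := by simp_rw [sq (u _ ^ 2 + v _ ^ 2)]
  have sq_a : ∫ ω, (a₁ ω * u ω + a₂ ω * v ω) ^ 2 ∂μ = ∫ ω, u ω ^ 2 + v ω ^ 2 ∂μ := by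
    simpa using integral_sq_linComb_mul_of_indepFun (g := fun _ => 1)
      (hab.comp measurable_id (ψ := fun z : (ℝ × ℝ) × ℝ × ℝ => (z.2.1, z.2.2, 1)) (by fun_prop))
      ha ha₁ ha₂ hu hv (memLp_const 1)
  have sq_b : ∫ ω, (b₁ ω * u ω + b₂ ω * v ω) ^ 2 ∂μ = ∫ ω, u ω ^ 2 + v ω ^ 2 ∂μ := by
    simpa using integral_sq_linComb_mul_of_indepFun (g := fun _ => 1)
      (hbc.comp measurable_id (ψ := fun c : ℝ × ℝ => (c.1, c.2, 1)) (by fun_prop))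
      hb hb₁₂ hb₂₂ hu hv (memLp_const 1)
  rw [mixed, sq_a, sq_b, sq]

end

theorem kron_two_by_two_cov_general {Ω : Type*} [MeasureSpace Ω]
    [IsProbabilityMeasure (volume : Measure Ω)]
    (e : Fin 8 → Ω → ℝ)
    (hmeas : ∀ p, Measurable (e p))
    (hindep : iIndepFun e volume)
    (hmean : ∀ p, ∫ ω, e p ω = 0)
    (hvar : ∀ p, ∫ ω, (e p ω) ^ 2 = 1)
    (hint : ∀ p, Integrable fun ω => (e p ω) ^ 4)
    (x1 x2 x3 x4 : ℝ) :
    -- entries: a₁ = e 0, a₂ = e 1, b₁ = e 2, b₂ = e 3, c₁ = e 4, c₂ = e 5, d₁ = e 6, d₂ = e 7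
    (∫ ω, (kronCoord (e 0 ω) (e 1 ω) (e 4 ω) (e 5 ω) x1 x2 x3 x4) ^ 2 *
          (kronCoord (e 2 ω) (e 3 ω) (e 4 ω) (e 5 ω) x1 x2 x3 x4) ^ 2)
      - (∫ ω, (kronCoord (e 0 ω) (e 1 ω) (e 4 ω) (e 5 ω) x1 x2 x3 x4) ^ 2) *
        (∫ ω, (kronCoord (e 2 ω) (e 3 ω) (e 4 ω) (e 5 ω) x1 x2 x3 x4) ^ 2)
      = (x1 ^ 2 + x3 ^ 2) ^ 2 * ((∫ ω, (e 4 ω) ^ 4) - (∫ ω, (e 4 ω) ^ 2) ^ 2)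
        + (x2 ^ 2 + x4 ^ 2) ^ 2 * ((∫ ω, (e 5 ω) ^ 4) - (∫ ω, (e 5 ω) ^ 2) ^ 2)
        + 4 * (x1 * x2 + x3 * x4) ^ 2 := by
  have hL4 (p : Fin 8) : MemLp (e p) 4 := by
    simpa using (memLp_iff_integrable_pow_of_even (n := 4) (by decide) (by norm_num)
      (hmeas p).aestronglyMeasurable).2 (hint p)
  have horth {p q : Fin 8} (hpq : p ≠ q) : IsOrthonormalPair (e p) (e q) volume := by
    refine ⟨hvar p, hvar q, ?_⟩
    refine ((hindep.indepFun hpq).integral_mul_eq_mul_integral (hL4 p).1 (hL4 q).1).trans ?_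
    rw [hmean, zero_mul]
  set u : Ω → ℝ := fun ω => x1 * e 4 ω + x2 * e 5 ω
  set v : Ω → ℝ := fun ω => x3 * e 4 ω + x4 * e 5 ω
  have hy (a₁ a₂ : ℝ) (ω : Ω) :
      kronCoord a₁ a₂ (e 4 ω) (e 5 ω) x1 x2 x3 x4 = a₁ * u ω + a₂ * v ω := by
    simp only [kronCoord, u, v]; ring
  have hS (ω : Ω) : u ω ^ 2 + v ω ^ 2 = (x1 ^ 2 + x3 ^ 2) * e 4 ω ^ 2
      + 2 * (x1 * x2 + x3 * x4) * (e 4 ω * e 5 ω) + (x2 ^ 2 + x4 ^ 2) * e 5 ω ^ 2 := by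
    simp only [u, v]; ring
  have hc : Measurable fun c : ℝ × ℝ => (x1 * c.1 + x2 * c.2, x3 * c.1 + x4 * c.2) := by
    fun_prop
  have hab : IndepFun (fun ω => (e 0 ω, e 1 ω)) (fun ω => ((e 2 ω, e 3 ω), (u ω, v ω))) :=
    (hindep.indepFun_prodMk_prodMk_prodMk hmeas (i := 0) (j := 1) (k := 2) (l := 3) (m := 4)
      (n := 5) (by decide)).comp measurable_id (measurable_id.prodMap hc)
  have hbc : IndepFun (fun ω => (e 2 ω, e 3 ω)) (fun ω => (u ω, v ω)) :=
    (hindep.indepFun_prodMk_prodMk hmeas 2 3 4 5 (by decide) (by decide) (by decide)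
      (by decide)).comp measurable_id hc
  simp only [hy]
  rw [cov_sq_linComb_eq_var_sumSq hab hbc (horth (by decide)) (horth (by decide))
    ((hL4 0).mono_exponent (by norm_num)) ((hL4 1).mono_exponent (by norm_num)) (hL4 2) (hL4 3)
    (((hL4 4).const_mul x1).add ((hL4 5).const_mul x2))
    (((hL4 4).const_mul x3).add ((hL4 5).const_mul x4))]
  simp only [hS]
  exact var_quadForm_of_indepFun (hindep.indepFun (by decide)) (hL4 4) (hL4 5) (hmean 4)
    (hmean 5) (hvar 4) (hvar 5) _ _ _

/-- Covariance of squared coordinates in the 2×2 Kronecker example: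
`Cov(y(1)², y(3)²) = (x₁²+x₃²)² Var(c₁²) + (x₂²+x₄²)² Var(c₂²) + 4(x₁x₂+x₃x₄)²`. -/
theorem kron_two_by_two_cov {Ω : Type*} [MeasureSpace Ω]
    [IsProbabilityMeasure (volume : Measure Ω)]
    (e : Fin 8 → Ω → ℝ)
    (hmeas : ∀ p, Measurable (e p))
    (hindep : iIndepFun e volume)
    (hid : ∀ p q, IdentDistrib (e p) (e q) volume volume)
    (hmean : ∀ p, ∫ ω, e p ω = 0)
    (hvar : ∀ p, ∫ ω, (e p ω) ^ 2 = 1)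
    (hint : ∀ p, Integrable fun ω => (e p ω) ^ 4)
    (x1 x2 x3 x4 : ℝ) :
    -- entries: a₁ = e 0, a₂ = e 1, b₁ = e 2, b₂ = e 3, c₁ = e 4, c₂ = e 5, d₁ = e 6, d₂ = e 7
    (∫ ω, (kronCoord (e 0 ω) (e 1 ω) (e 4 ω) (e 5 ω) x1 x2 x3 x4) ^ 2 *
          (kronCoord (e 2 ω) (e 3 ω) (e 4 ω) (e 5 ω) x1 x2 x3 x4) ^ 2)
      - (∫ ω, (kronCoord (e 0 ω) (e 1 ω) (e 4 ω) (e 5 ω) x1 x2 x3 x4) ^ 2) *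
        (∫ ω, (kronCoord (e 2 ω) (e 3 ω) (e 4 ω) (e 5 ω) x1 x2 x3 x4) ^ 2)
      = (x1 ^ 2 + x3 ^ 2) ^ 2 * ((∫ ω, (e 4 ω) ^ 4) - (∫ ω, (e 4 ω) ^ 2) ^ 2)
        + (x2 ^ 2 + x4 ^ 2) ^ 2 * ((∫ ω, (e 5 ω) ^ 4) - (∫ ω, (e 5 ω) ^ 2) ^ 2)
        + 4 * (x1 * x2 + x3 * x4) ^ 2 :=
  kron_two_by_two_cov_general e hmeas hindep hmean hvar hint x1 x2 x3 x4
end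

section
/- Let y ∈ ℝ^M with M = ∏_{i=1}^d mᵢ arise as y = Rx for R = R₁ ⊗ ⋯ ⊗ R_d with i.i.d. mean-zero unit-variance entries of fourth moment Δ. For two distinct row multi-indices differing in exactly l of the d coordinates, E[y(i)² y(j)²] ≤ n^l (Δ + 3(n−1))^{d−l} N ℳ⁴, where n = max nᵢ, N = ∏nᵢ, ℳ = max_i |x(i)|. -/
/-!
Expanding the squares, `E[y(i)² y(j)²]` is a sum over four column multi-indices `p, p', q, q'`
of `x p * x p' * x q * x q'` times the expectation of a monomial in the independent entries; the
monomial splits over the Kronecker factors, so its expectation is a product over `k` of the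
fourth mixed moment of the entries `(i k, p k), (i k, p' k), (j k, q k), (j k, q' k)` of `R k`.
These mixed moments are nonnegative, so each `x` may be bounded by `ℳ`, and summing the moment of
block `k` over its four columns gives `n k * (Δ + 3 (n k - 1))` when `i k = j k` and `(n k)²`
otherwise.
-/

open MeasureTheory ProbabilityTheory Finset

section Integrability

variable {Ω ι : Type*} [MeasurableSpace Ω] {μ : Measure Ω}

lemma integrable_pow_of_le [IsFiniteMeasure μ] {X : Ω → ℝ} (hX : AEStronglyMeasurable X μ)
    {N e : ℕ} (hN : Integrable (fun ω => X ω ^ N) μ) (he : e ≤ N) :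
    Integrable (fun ω => X ω ^ e) μ := by
  refine ((integrable_const 1).add hN.norm).mono (hX.pow e) (ae_of_all _ fun ω => ?_)
  have hXN : 0 ≤ |X ω| ^ N := by positivity
  simp only [Pi.add_apply, norm_pow, Real.norm_eq_abs,
    abs_of_nonneg (add_nonneg zero_le_one hXN)]
  rcases le_total |X ω| 1 with h | h
  · linarith [pow_le_one₀ (abs_nonneg (X ω)) h (n := e)]
  · linarith [pow_le_pow_right₀ h he]

lemma ProbabilityTheory.iIndepFun.integrable_finset_prod {Y : ι → Ω → ℝ}
    (hY : iIndepFun Y μ) (hm : ∀ i, Measurable (Y i)) (hint : ∀ i, Integrable (Y i) μ)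
    (s : Finset ι) : Integrable (∏ i ∈ s, Y i) μ := by
  classical
  have := hY.isProbabilityMeasure
  induction s using Finset.induction_on with
  | empty =>
    rw [prod_empty]
    exact integrable_const 1
  | insert a s ha ih =>
    rw [prod_insert ha]
    exact (hY.indepFun_finsetProd_of_notMem hm ha).symm.integrable_mul (hint a) ih

end Integrability

section FourthMoment

variable {κ : Type*} [DecidableEq κ]

/-- `E[X a * X b * X c * X e]` for independent, mean-zero, unit-variance `X` with `E[X v ^ 4] = Δ`:
Isserlis' pairing formula, corrected on the diagonal by the excess kurtosis `Δ - 3`. -/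
noncomputable def fourMoment (Δ : ℝ) (a b c e : κ) : ℝ :=
  (Δ - 3) * (if a = b ∧ b = c ∧ c = e then 1 else 0)
    + (if a = b ∧ c = e then 1 else 0) + (if a = c ∧ b = e then 1 else 0)
    + (if a = e ∧ b = c then 1 else 0)

lemma fourMoment_nonneg {Δ : ℝ} (hΔ : 0 ≤ Δ) (a b c e : κ) : 0 ≤ fourMoment Δ a b c e := by
  unfold fourMoment
  by_cases h : a = b ∧ b = c ∧ c = e
  · obtain ⟨rfl, rfl, rfl⟩ := h
    norm_num
    linarith
  · rw [if_neg h, mul_zero, zero_add]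
    positivity

lemma sum_fourMoment_rows {α : Type*} [Fintype α] [DecidableEq α] (Δ : ℝ) (r r' : κ) :
    ∑ a : α, ∑ b : α, ∑ c : α, ∑ e : α, fourMoment Δ (r, a) (r, b) (r', c) (r', e)
      = Fintype.card α * (if r = r' then Δ + 3 * (Fintype.card α - 1) else Fintype.card α) := by
  by_cases hr : r = r'
  · subst hr
    simp only [fourMoment, Prod.mk.injEq, true_and, sum_add_distrib, ← mul_sum, ite_and]
    simp [sum_ite_eq]
    ring
  · simp [fourMoment, hr, ite_and, sum_ite_eq]

lemma sum_fourMoment_rows_le {α : Type*} [Fintype α] [DecidableEq α] {N : ℕ}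
    (hN : Fintype.card α ≤ N) (Δ : ℝ) (r r' : κ) :
    ∑ a : α, ∑ b : α, ∑ c : α, ∑ e : α, fourMoment Δ (r, a) (r, b) (r', c) (r', e)
      ≤ Fintype.card α * (if r = r' then Δ + 3 * (N - 1) else (N : ℝ)) := by
  have hN' : (Fintype.card α : ℝ) ≤ N := by exact_mod_cast hN
  rw [sum_fourMoment_rows]
  split_ifs <;> gcongr

lemma prod_comp_eq_prod_pow_card_fiber_s17 {α M : Type*} [Fintype α] [Fintype κ] [CommMonoid M]
    (s : α → κ) (Y : κ → M) : ∏ t, Y (s t) = ∏ v, Y v ^ #{t | s t = v} := by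
  simp_rw [← prod_fiberwise' univ s Y, prod_const]

lemma prod_moment_card_fiber_eq_fourMoment [Fintype κ] (g : κ → ℕ → ℝ) (Δ : ℝ)
    (h0 : ∀ v, g v 0 = 1) (h1 : ∀ v, g v 1 = 0) (h2 : ∀ v, g v 2 = 1) (h4 : ∀ v, g v 4 = Δ)
    (a b c e : κ) :
    ∏ v, g v #{t | ![a, b, c, e] t = v} = fourMoment Δ a b c e := by
  simp only [card_filter, Fin.sum_univ_four, Matrix.cons_val_zero, Matrix.cons_val_one,
    Matrix.cons_val_two, Matrix.cons_val_three]
  rw [← prod_subset (subset_univ {a, b, c, e}) fun v _ hv => by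
    simp only [mem_insert, mem_singleton, not_or] at hv
    simp [Ne.symm hv.1, Ne.symm hv.2.1, Ne.symm hv.2.2.1, Ne.symm hv.2.2.2, h0]]
  unfold fourMoment
  -- a point of multiplicity one kills the product (`g v 1 = 0`), as it kills the right side
  by_cases hab : a = b <;> by_cases hac : a = c <;> by_cases hae : a = e <;>
    by_cases hbc : b = c <;> by_cases hbe : b = e <;> by_cases hce : c = e <;>
    subst_vars <;> simp_all [prod_insert, Ne.symm]
  ring

end FourthMoment

section BlockMultiplicity

variable {K : Type*} {κ : K → Type*} [∀ k, DecidableEq (κ k)]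

def blockMult (a b c e : ∀ k, κ k) (s : Σ k, κ k) : ℕ :=
  #{t | ![a s.1, b s.1, c s.1, e s.1] t = s.2}

lemma blockMult_le_four (a b c e : ∀ k, κ k) (s : Σ k, κ k) : blockMult a b c e s ≤ 4 :=
  (card_le_univ _).trans_eq (Fintype.card_fin 4)

lemma fun_prod_blocks_eq_fun_prod_pow_blockMult [Fintype K] [∀ k, Fintype (κ k)]
    {Ω M : Type*} [CommMonoid M] (Y : (Σ k, κ k) → Ω → M) (a b c e : ∀ k, κ k) :
    (fun ω => ∏ k, Y ⟨k, a k⟩ ω * Y ⟨k, b k⟩ ω * Y ⟨k, c k⟩ ω * Y ⟨k, e k⟩ ω)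
      = fun ω => ∏ s, Y s ω ^ blockMult a b c e s := by
  funext ω
  rw [← univ_sigma_univ, prod_sigma]
  refine prod_congr rfl fun k _ => ?_
  have := prod_comp_eq_prod_pow_card_fiber_s17 ![a k, b k, c k, e k] (fun v => Y ⟨k, v⟩ ω)
  rwa [Fin.prod_univ_four] at this

end BlockMultiplicity

lemma sq_mul_sq_sum_prod {K R : Type*} [Fintype K] [DecidableEq K] [CommSemiring R]
    {α : K → Type*} [∀ k, Fintype (α k)] (A B : ∀ k, α k → R) (x : (∀ k, α k) → R) :
    (∑ p, (∏ k, A k (p k)) * x p) ^ 2 * (∑ q, (∏ k, B k (q k)) * x q) ^ 2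
      = ∑ p, ∑ p', ∑ q, ∑ q', x p * x p' * x q * x q'
          * ∏ k, A k (p k) * A k (p' k) * B k (q k) * B k (q' k) := by
  rw [sq, sq, sum_mul_sum, sum_mul_sum]
  simp_rw [sum_mul]
  simp_rw [mul_sum]
  refine sum_congr rfl fun p _ => sum_congr rfl fun p' _ =>
    sum_congr rfl fun q _ => sum_congr rfl fun q' _ => ?_
  simp only [prod_mul_distrib]
  ring

structure IndepStandardized {Ω ι : Type*} [MeasurableSpace Ω] (X : ι → Ω → ℝ) (Δ : ℝ)
    (μ : Measure Ω) : Prop where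
  indep : iIndepFun X μ
  measurable : ∀ s, Measurable (X s)
  integrable_pow_four : ∀ s, Integrable (fun ω => X s ω ^ 4) μ
  integral_eq_zero : ∀ s, ∫ ω, X s ω ∂μ = 0
  integral_sq : ∀ s, ∫ ω, X s ω ^ 2 ∂μ = 1
  integral_pow_four : ∀ s, ∫ ω, X s ω ^ 4 ∂μ = Δ

namespace IndepStandardized

variable {Ω : Type*} [MeasurableSpace Ω] {μ : Measure Ω} {Δ : ℝ}

lemma integrable_prod_pow {ι : Type*} [Fintype ι] {X : ι → Ω → ℝ}
    (hX : IndepStandardized X Δ μ) (e : ι → ℕ) (he : ∀ s, e s ≤ 4) :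
    Integrable (fun ω => ∏ s, X s ω ^ e s) μ := by
  have := hX.indep.isProbabilityMeasure
  have h := (hX.indep.comp (fun s y => y ^ e s) fun s => measurable_id.pow_const _)
    |>.integrable_finset_prod (fun s => (hX.measurable s).pow_const _)
      (fun s => integrable_pow_of_le (hX.measurable s).aestronglyMeasurable
        (hX.integrable_pow_four s) (he s)) univ
  simpa [Finset.prod_fn] using h

section Blocks

variable {K : Type*} [Fintype K] {κ : K → Type*} [∀ k, Fintype (κ k)] [∀ k, DecidableEq (κ k)]
  {X : (Σ k, κ k) → Ω → ℝ}

lemma integrable_prod_blocks (hX : IndepStandardized X Δ μ) (a b c e : ∀ k, κ k) :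
    Integrable (fun ω => ∏ k, X ⟨k, a k⟩ ω * X ⟨k, b k⟩ ω * X ⟨k, c k⟩ ω * X ⟨k, e k⟩ ω) μ := by
  rw [fun_prod_blocks_eq_fun_prod_pow_blockMult]
  exact hX.integrable_prod_pow _ (blockMult_le_four a b c e)

lemma integral_prod_blocks (hX : IndepStandardized X Δ μ) (a b c e : ∀ k, κ k) :
    ∫ ω, ∏ k, X ⟨k, a k⟩ ω * X ⟨k, b k⟩ ω * X ⟨k, c k⟩ ω * X ⟨k, e k⟩ ω ∂μ
      = ∏ k, fourMoment Δ (a k) (b k) (c k) (e k) := by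
  have := hX.indep.isProbabilityMeasure
  rw [fun_prod_blocks_eq_fun_prod_pow_blockMult,
    hX.indep.integral_fun_prod_comp (f := fun s y => y ^ blockMult a b c e s)
      (fun s => (hX.measurable s).aemeasurable)
      (fun s => (continuous_pow _).aestronglyMeasurable),
    ← univ_sigma_univ, prod_sigma]
  refine prod_congr rfl fun k _ => ?_
  exact prod_moment_card_fiber_eq_fourMoment (fun v n => ∫ ω, X ⟨k, v⟩ ω ^ n ∂μ) Δ
    (fun v => by simp) (fun v => by simpa using hX.integral_eq_zero _)
    (fun v => hX.integral_sq _) (fun v => hX.integral_pow_four _) (a k) (b k) (c k) (e k)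

end Blocks

lemma integral_sq_mul_sq_kronecker {K : Type*} [Fintype K] [DecidableEq K] {ρ α : K → Type*}
    [∀ k, Fintype (ρ k)] [∀ k, DecidableEq (ρ k)] [∀ k, Fintype (α k)] [∀ k, DecidableEq (α k)]
    {X : (Σ k, ρ k × α k) → Ω → ℝ} (hX : IndepStandardized X Δ μ) (x : (∀ k, α k) → ℝ)
    (i j : ∀ k, ρ k) :
    ∫ ω, (∑ p, (∏ k, X ⟨k, (i k, p k)⟩ ω) * x p) ^ 2
        * (∑ q, (∏ k, X ⟨k, (j k, q k)⟩ ω) * x q) ^ 2 ∂μ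
      = ∑ p, ∑ p', ∑ q, ∑ q', x p * x p' * x q * x q'
          * ∏ k, fourMoment Δ (i k, p k) (i k, p' k) (j k, q k) (j k, q' k) := by
  have hexpand := fun ω =>
    sq_mul_sq_sum_prod (fun k a => X ⟨k, (i k, a)⟩ ω) (fun k a => X ⟨k, (j k, a)⟩ ω) x
  have hterm := fun p p' q q' =>
    (hX.integrable_prod_blocks (fun k => (i k, p k)) (fun k => (i k, p' k))
      (fun k => (j k, q k)) (fun k => (j k, q' k))).const_mul (x p * x p' * x q * x q')
  simp only [hexpand]
  -- each integrability side condition sits under up to four nested `integrable_finsetSum`s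
  simp (maxDischargeDepth := 5) only [integral_finsetSum, integrable_finsetSum, hterm,
    implies_true, integral_const_mul, hX.integral_prod_blocks, mem_univ]

end IndepStandardized

lemma prod_mul_ite_eq {K : Type*} [Fintype K] (P : K → Prop) [DecidablePred P] (f : K → ℝ)
    (A B : ℝ) :
    ∏ k, f k * (if P k then A else B)
      = B ^ #{k | ¬P k} * A ^ (Fintype.card K - #{k | ¬P k}) * ∏ k, f k := by
  have hcard := card_filter_add_card_filter_not (s := univ) (p := P)
  rw [card_univ] at hcard
  rw [prod_mul_distrib, prod_ite, prod_const, prod_const, ← hcard, Nat.add_sub_cancel]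
  ring

lemma mul_mul_mul_le_iSup_abs_pow_four {β : Type*} [Finite β] (x : β → ℝ) (p p' q q' : β) :
    x p * x p' * x q * x q' ≤ (⨆ p, |x p|) ^ 4 := by
  have hle : ∀ p, |x p| ≤ ⨆ p, |x p| := le_ciSup (Set.finite_range _).bddAbove
  have h0 : 0 ≤ ⨆ p, |x p| := Real.iSup_nonneg fun _ => abs_nonneg _
  calc x p * x p' * x q * x q' ≤ |x p| * |x p'| * |x q| * |x q'| := by
        simp only [← abs_mul]
        exact le_abs_self _
    _ ≤ (⨆ p, |x p|) * (⨆ p, |x p|) * (⨆ p, |x p|) * (⨆ p, |x p|) := by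
        gcongr <;> exact hle _
    _ = (⨆ p, |x p|) ^ 4 := by ring

theorem ttrp_cross_moment_bound_general {Ω : Type*} [MeasureSpace Ω]
    {d : ℕ} (m n : Fin d → ℕ) (Δ : ℝ)
    (R : ∀ k : Fin d, Ω → Matrix (Fin (m k)) (Fin (n k)) ℝ)
    (hmeas : ∀ k i j, Measurable fun ω => R k ω i j)
    (hindep : iIndepFun
      (fun p : Σ k : Fin d, Fin (m k) × Fin (n k) => fun ω => R p.1 ω p.2.1 p.2.2) volume)
    (hmean : ∀ k i j, ∫ ω, R k ω i j = 0)
    (hvar : ∀ k i j, ∫ ω, (R k ω i j) ^ 2 = 1)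
    (hfour : ∀ k i j, ∫ ω, (R k ω i j) ^ 4 = Δ)
    (hint : ∀ k i j, Integrable fun ω => (R k ω i j) ^ 4)
    (x : (∀ k, Fin (n k)) → ℝ)
    (l : ℕ) (i j : ∀ k, Fin (m k))
    (hl : (univ.filter fun k => i k ≠ j k).card = l) :
    ∫ ω, (∑ p : ∀ k, Fin (n k), (∏ k, R k ω (i k) (p k)) * x p) ^ 2 *
          (∑ p : ∀ k, Fin (n k), (∏ k, R k ω (j k) (p k)) * x p) ^ 2
      ≤ ((univ.sup n : ℕ) : ℝ) ^ l * (Δ + 3 * (((univ.sup n : ℕ) : ℝ) - 1)) ^ (d - l) *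
          (∏ k, (n k : ℝ)) * (⨆ p, |x p|) ^ 4 := by
  have hX : IndepStandardized (fun (s : Σ k, Fin (m k) × Fin (n k)) ω => R s.1 ω s.2.1 s.2.2)
      Δ volume :=
    ⟨hindep, fun _ => hmeas _ _ _, fun _ => hint _ _ _, fun _ => hmean _ _ _,
      fun _ => hvar _ _ _, fun _ => hfour _ _ _⟩
  have hΔ : ∀ k, Fin (n k) → 0 ≤ Δ := fun k a =>
    hfour k (i k) a ▸ integral_nonneg fun ω => by positivity
  calc _ = ∑ p, ∑ p', ∑ q, ∑ q', x p * x p' * x q * x q'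
          * ∏ k, fourMoment Δ (i k, p k) (i k, p' k) (j k, q k) (j k, q' k) :=
        hX.integral_sq_mul_sq_kronecker x i j
    _ ≤ (⨆ p, |x p|) ^ 4
          * ∏ k, ∑ a, ∑ b, ∑ c, ∑ e, fourMoment Δ (i k, a) (i k, b) (j k, c) (j k, e) := by
        simp only [Fintype.prod_sum, mul_sum]
        gcongr with p _ p' _ q _ q' _
        · exact prod_nonneg fun k _ => fourMoment_nonneg (hΔ k (p k)) _ _ _ _
        · exact mul_mul_mul_le_iSup_abs_pow_four x p p' q q'
    _ ≤ (⨆ p, |x p|) ^ 4 * ∏ k, (n k * (if i k = j k then Δ + 3 * ((univ.sup n : ℕ) - 1)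
          else ((univ.sup n : ℕ) : ℝ))) := by
        gcongr with k
        · exact fun k _ => sum_nonneg fun a _ => sum_nonneg fun _ _ => sum_nonneg fun _ _ =>
            sum_nonneg fun _ _ => fourMoment_nonneg (hΔ k a) _ _ _ _
        · exact (sum_fourMoment_rows_le (by simpa using le_sup (mem_univ k)) Δ _ _).trans_eq
            (by rw [Fintype.card_fin])
    _ = _ := by
        rw [prod_mul_ite_eq, Fintype.card_fin, ← hl]
        ring

/-- Cross-moment bound: for `y = Rx` with `R = R₁ ⊗ ⋯ ⊗ R_d` having i.i.d.
mean-zero unit-variance entries with fourth moment `Δ`, and two distinct row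
multi-indices `i ≠ j` differing in exactly `l` of the `d` coordinates,
`E[y(i)² y(j)²] ≤ n^l (Δ + 3(n−1))^{d−l} N ℳ⁴`. -/
theorem ttrp_cross_moment_bound {Ω : Type*} [MeasureSpace Ω]
    [IsProbabilityMeasure (volume : Measure Ω)]
    {d : ℕ} (m n : Fin d → ℕ) (Δ : ℝ)
    (R : ∀ k : Fin d, Ω → Matrix (Fin (m k)) (Fin (n k)) ℝ)
    (hmeas : ∀ k i j, Measurable fun ω => R k ω i j)
    (hindep : iIndepFun
      (fun p : Σ k : Fin d, Fin (m k) × Fin (n k) => fun ω => R p.1 ω p.2.1 p.2.2) volume)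
    (hid : ∀ p q : Σ k : Fin d, Fin (m k) × Fin (n k),
      IdentDistrib (fun ω => R p.1 ω p.2.1 p.2.2) (fun ω => R q.1 ω q.2.1 q.2.2)
        volume volume)
    (hmean : ∀ k i j, ∫ ω, R k ω i j = 0)
    (hvar : ∀ k i j, ∫ ω, (R k ω i j) ^ 2 = 1)
    (hfour : ∀ k i j, ∫ ω, (R k ω i j) ^ 4 = Δ)
    (hint : ∀ k i j, Integrable fun ω => (R k ω i j) ^ 4)
    (x : (∀ k, Fin (n k)) → ℝ)
    (l : ℕ) (i j : ∀ k, Fin (m k)) (hij : i ≠ j)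
    (hl : (univ.filter fun k => i k ≠ j k).card = l) :
    ∫ ω, (∑ p : ∀ k, Fin (n k), (∏ k, R k ω (i k) (p k)) * x p) ^ 2 *
          (∑ p : ∀ k, Fin (n k), (∏ k, R k ω (j k) (p k)) * x p) ^ 2
      ≤ ((univ.sup n : ℕ) : ℝ) ^ l * (Δ + 3 * (((univ.sup n : ℕ) : ℝ) - 1)) ^ (d - l) *
          (∏ k, (n k : ℝ)) * (⨆ p, |x p|) ^ 4 :=
  ttrp_cross_moment_bound_general m n Δ R hmeas hindep hmean hvar hfour hint x l i j hl
end
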